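/- arXiv:2510.16376 — 2 statements merged into one kernel-verified Lean document; each statement's English description precedes it below -/
import Mathlib

section
/- Let v : ℝᵐ → (0,∞) be a likelihood ratio and Y, Y¹, ..., Yᴸ random variables such that (Y¹,...,Yᴸ) are i.i.d. from a distribution P and Y is drawn from the distribution Q with dQ/dP = v (weighted exchangeability/covariate shift). Define weights p(Yⁱ) = v(Yⁱ)/(Σⱼ v(Yʲ) + v(Y)) and p(Y) = v(Y)/(Σⱼ v(Yʲ) + v(Y)). Then for any measurable score function s and threshold structure, P(s(Y) < 0) ≤ E[p(Y) + Σᵢ p(Yⁱ)·1[s(Yⁱ) < 0]] — i.e., the weighted conformal posterior bound is valid under covariate shift. -/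
open MeasureTheory ProbabilityTheory Finset
open scoped ENNReal NNReal

section Aux

variable {α β : Type*} [MeasurableSpace α] [MeasurableSpace β]

lemma map_withDensity_equiv (e : α ≃ᵐ β) (μ : Measure α) (f : β → ℝ≥0∞) (hf : Measurable f) :
    (μ.withDensity (fun a => f (e a))).map e = (μ.map e).withDensity f := by
  ext s hs
  rw [Measure.map_apply e.measurable hs, withDensity_apply _ hs,
    withDensity_apply _ (e.measurable hs), ← setLIntegral_map hs hf e.measurable]

lemma prod_withDensity_left (μ : Measure α) (ν : Measure β) [SigmaFinite μ] [SigmaFinite ν]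
    {f : α → ℝ≥0∞} (hf : Measurable f) [SigmaFinite (μ.withDensity f)] :
    (μ.withDensity f).prod ν = (μ.prod ν).withDensity (fun p => f p.1) := by
  refine (Measure.prod_eq (μ := μ.withDensity f) (ν := ν) fun s t hs ht => ?_)
  rw [withDensity_apply _ (hs.prod ht), ← Measure.prod_restrict,
    show (fun (p : α × β) => f p.1) = fun p => f p.1 * (fun _ : β => (1:ℝ≥0∞)) p.2 by simp,
    lintegral_prod_mul hf.aemeasurable aemeasurable_const]
  simp [withDensity_apply _ hs, Measure.restrict_apply MeasurableSet.univ]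

/-- General version of the weighted conformal bound, over an arbitrary measurable space. -/
theorem weighted_conformal_posterior_bound_aux {Ω : Type*} [MeasurableSpace Ω]
    (μ : Measure Ω) [IsProbabilityMeasure μ] (L : ℕ)
    (Z : Fin (L + 1) → Ω → α)
    (hmeas : ∀ i, Measurable (Z i))
    (hindep : iIndepFun Z μ)
    (P : Measure α) [IsProbabilityMeasure P]
    (v : α → ℝ) (hv : ∀ y, 0 < v y) (hvmeas : Measurable v)
    (hcal : ∀ i : Fin (L + 1), i ≠ 0 → Measure.map (Z i) μ = P)
    (htest : Measure.map (Z 0) μ = P.withDensity (fun y => ENNReal.ofReal (v y)))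
    (s : α → ℝ) (hs : Measurable s) :
    (μ {ω | s (Z 0 ω) < 0}).toReal ≤
      ∫ ω, (v (Z 0 ω) +
          ∑ i ∈ Finset.univ.filter (fun i : Fin (L + 1) => i ≠ 0 ∧ s (Z i ω) < 0),
            v (Z i ω)) /
        (∑ i, v (Z i ω)) ∂μ := by
  set w : α → ℝ≥0∞ := fun y => ENNReal.ofReal (v y) with hw
  have hwmeas : Measurable w := hvmeas.ennreal_ofReal
  set ν : Fin (L + 1) → Measure α := fun i => if i = 0 then P.withDensity w else P with hν
  have hprob : ∀ i, IsProbabilityMeasure (ν i) := by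
    intro i
    by_cases h : i = 0
    · have : IsProbabilityMeasure (μ.map (Z 0)) :=
        Measure.isProbabilityMeasure_map (hmeas 0).aemeasurable
      rw [htest] at this
      simpa [hν, h] using this
    · simpa [hν, h] using inferInstanceAs (IsProbabilityMeasure P)
  haveI : ∀ i, IsProbabilityMeasure (ν i) := hprob
  haveI : IsProbabilityMeasure (P.withDensity w) := by simpa [hν] using hprob 0
  set T : Ω → (Fin (L + 1) → α) := fun ω i => Z i ω with hTdef
  have hT : Measurable T := measurable_pi_lambda _ hmeas
  have hmapi : ∀ i, μ.map (Z i) = ν i := by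
    intro i; by_cases h : i = 0
    · subst h; simp [hν, htest]
    · simp [hν, h, hcal i h]
  have hjoint : μ.map T = Measure.pi ν := by
    refine (Measure.pi_eq fun sets hsets => ?_).symm
    rw [Measure.map_apply hT (MeasurableSet.univ_pi hsets)]
    have hpre : T ⁻¹' Set.univ.pi sets
        = ⋂ i ∈ (Finset.univ : Finset (Fin (L + 1))), Z i ⁻¹' sets i := by
      ext ω; simp [hTdef, Set.mem_pi]
    rw [hpre, hindep.measure_inter_preimage_eq_mul Finset.univ (fun i _ => hsets i)]
    refine Finset.prod_congr rfl fun i _ => ?_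
    rw [← hmapi i, Measure.map_apply (hmeas i) (hsets i)]
  set Pπ : Measure (Fin (L + 1) → α) := Measure.pi (fun _ => P) with hPπ
  set ρ : Measure (Fin L → α) := Measure.pi (fun _ => P) with hρ
  set e := MeasurableEquiv.piFinSuccAbove (fun _ : Fin (L + 1) => α) 0 with he
  have hsucc : (fun j : Fin L => ν ((0 : Fin (L + 1)).succAbove j)) = fun _ => P := by
    funext j; simp [hν, Fin.zero_succAbove, Fin.succ_ne_zero]
  have h1 : MeasurePreserving e (Measure.pi ν) ((P.withDensity w).prod ρ) := by
    have h := measurePreserving_piFinSuccAbove ν 0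
    rw [hsucc] at h
    simpa [hν, hρ, he] using h
  have h2 : MeasurePreserving e Pπ (P.prod ρ) :=
    measurePreserving_piFinSuccAbove (fun _ => P) 0
  have hdens : Measure.pi ν = Pπ.withDensity (fun y => w (y 0)) := by
    have hcomp : (fun p : α × (Fin L → α) => w p.1)
        = fun p => (fun y : Fin (L + 1) → α => w (y 0)) (e.symm p) := by
      funext p
      simp [he]
    calc Measure.pi ν = Measure.map e.symm ((P.withDensity w).prod ρ) :=
          ((h1.symm e).map_eq).symm
      _ = Measure.map e.symm ((P.prod ρ).withDensity (fun p => w p.1)) := by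
          rw [prod_withDensity_left P ρ hwmeas]
      _ = Pπ.withDensity (fun y => w (y 0)) := by
          rw [hcomp,
            map_withDensity_equiv e.symm (P.prod ρ) (fun y => w (y 0))
              (hwmeas.comp (measurable_pi_apply 0) : Measurable fun y : Fin (L + 1) → α => w (y 0)),
            (h2.symm e).map_eq]
  set vN : α → ℝ≥0 := fun x => (v x).toNNReal with hvN
  have hvNmeas : Measurable vN := hvmeas.real_toNNReal
  have hXfer : ∀ g : (Fin (L + 1) → α) → ℝ,
      ∫ y, g y ∂(Measure.pi ν) = ∫ y, v (y 0) * g y ∂Pπ := by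
    intro g
    rw [hdens]
    have hwv : (fun y : Fin (L + 1) → α => w (y 0))
        = fun y => ((vN (y 0) : ℝ≥0) : ℝ≥0∞) := by
      funext y; simp [hw, hvN, ENNReal.ofReal]
    rw [hwv, integral_withDensity_eq_integral_smul
      (f := fun y : Fin (L + 1) → α => vN (y 0))
      (hvNmeas.comp (measurable_pi_apply 0) : Measurable fun y : Fin (L + 1) → α => vN (y 0)) g]
    congr 1; funext y
    simp [hvN, NNReal.smul_def, Real.coe_toNNReal _ (hv _).le]
  -- the functions on the product space
  set S : (Fin (L + 1) → α) → ℝ := fun y => ∑ j, v (y j) with hSdef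
  have hSpos : ∀ y, 0 < S y :=
    fun y => Finset.sum_pos (fun j _ => hv _) ⟨0, Finset.mem_univ 0⟩
  set F : (Fin (L + 1) → α) → ℝ := fun y =>
    (v (y 0) + ∑ i ∈ Finset.univ.filter (fun i : Fin (L + 1) => i ≠ 0 ∧ s (y i) < 0), v (y i))
      / S y with hF
  have hmes_vj : ∀ j : Fin (L + 1), Measurable fun y : Fin (L + 1) → α => v (y j) :=
    fun j => hvmeas.comp (measurable_pi_apply j)
  have hmes_setj : ∀ j : Fin (L + 1), MeasurableSet {y : Fin (L + 1) → α | s (y j) < 0} :=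
    fun j => measurableSet_lt (hs.comp (measurable_pi_apply j)) measurable_const
  have hSmeas : Measurable S := Finset.measurable_sum _ (fun j _ => hmes_vj j)
  have hfilter_sum : ∀ y : Fin (L + 1) → α,
      (∑ i ∈ Finset.univ.filter (fun i : Fin (L + 1) => i ≠ 0 ∧ s (y i) < 0), v (y i))
        = ∑ i, if i ≠ 0 ∧ s (y i) < 0 then v (y i) else 0 :=
    fun y => Finset.sum_filter _ _
  have hFmeas : Measurable F := by
    apply Measurable.div _ hSmeas
    apply Measurable.add (hmes_vj 0)
    have hrw : (fun y : Fin (L + 1) → α =>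
        ∑ i ∈ Finset.univ.filter (fun i : Fin (L + 1) => i ≠ 0 ∧ s (y i) < 0), v (y i))
        = fun y => ∑ i, if i ≠ 0 ∧ s (y i) < 0 then v (y i) else 0 := by
      funext y; exact hfilter_sum y
    rw [hrw]
    refine Finset.measurable_sum _ fun i _ => Measurable.ite ?_ (hmes_vj i) measurable_const
    by_cases hi : i = 0
    · simp [hi]
    · simp only [hi, ne_eq, not_false_eq_true, true_and]
      exact hmes_setj i
  -- RHS identification
  have hRHS : ∫ ω, (v (Z 0 ω) +
          ∑ i ∈ Finset.univ.filter (fun i : Fin (L + 1) => i ≠ 0 ∧ s (Z i ω) < 0),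
            v (Z i ω)) / (∑ i, v (Z i ω)) ∂μ = ∫ y, F y ∂(Measure.pi ν) := by
    rw [← hjoint, integral_map hT.aemeasurable hFmeas.aestronglyMeasurable]
  -- LHS identification
  set A : Set (Fin (L + 1) → α) := {y | s (y 0) < 0} with hA
  have hAmeas : MeasurableSet A := hmes_setj 0
  have hLHS : (μ {ω | s (Z 0 ω) < 0}).toReal
      = ∫ y, A.indicator (1 : (Fin (L + 1) → α) → ℝ) y ∂(Measure.pi ν) := by
    rw [integral_indicator_one hAmeas, ← hjoint, measureReal_def, Measure.map_apply hT hAmeas]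
    rfl
  -- component functions
  set q : (Fin (L + 1) → α) → ℝ := fun y => if s (y 0) < 0 then v (y 0) else 0 with hq
  have hqmeas : Measurable q := Measurable.ite (hmes_setj 0) (hmes_vj 0) measurable_const
  have hq_nonneg : ∀ y, 0 ≤ q y := by
    intro y; rw [hq]; dsimp only; split_ifs; exacts [(hv _).le, le_rfl]
  have hq_le : ∀ y, q y ≤ v (y 0) := by
    intro y; rw [hq]; dsimp only; split_ifs; exacts [le_rfl, (hv _).le]
  set K : Fin (L + 1) → (Fin (L + 1) → α) → ℝ := fun i y => v (y i) * (q y / S y) with hK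
  set H : Fin (L + 1) → (Fin (L + 1) → α) → ℝ :=
    fun i y => v (y 0) * ((if s (y i) < 0 then v (y i) else 0) / S y) with hH
  have hKmeas : ∀ i, Measurable (K i) :=
    fun i => (hmes_vj i).mul (hqmeas.div hSmeas)
  have hHmeas : ∀ i, Measurable (H i) := fun i =>
    (hmes_vj 0).mul ((Measurable.ite (hmes_setj i) (hmes_vj i) measurable_const).div hSmeas)
  have hv_le_S : ∀ (y) (i : Fin (L + 1)), v (y i) ≤ S y := by
    intro y i
    exact Finset.single_le_sum (fun j _ => (hv (y j)).le) (Finset.mem_univ i)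
  -- integrability
  have hwint : ∫⁻ y, w (y 0) ∂Pπ = 1 := by
    have huniv : (Measure.pi ν) Set.univ = 1 := measure_univ
    rw [hdens] at huniv
    simpa [withDensity_apply _ MeasurableSet.univ] using huniv
  have hIv : Integrable (fun y : Fin (L + 1) → α => v (y 0)) Pπ := by
    refine ⟨(hmes_vj 0).aestronglyMeasurable, ?_⟩
    rw [hasFiniteIntegral_iff_norm]
    have : ∀ y : Fin (L + 1) → α, ENNReal.ofReal ‖v (y 0)‖ = w (y 0) := by
      intro y; rw [Real.norm_of_nonneg (hv _).le]
    simp only [this, hwint]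
    exact ENNReal.one_lt_top
  have hbound : ∀ g : (Fin (L + 1) → α) → ℝ, Measurable g → (∀ y, 0 ≤ g y) →
      (∀ y, g y ≤ v (y 0)) → Integrable g Pπ := by
    intro g hg hg0 hg1
    refine hIv.mono' hg.aestronglyMeasurable (Filter.Eventually.of_forall fun y => ?_)
    rw [Real.norm_of_nonneg (hg0 y)]; exact hg1 y
  have hK_nonneg : ∀ i y, 0 ≤ K i y := by
    intro i y
    exact mul_nonneg (hv _).le (div_nonneg (hq_nonneg y) (hSpos y).le)
  have hK_le : ∀ i y, K i y ≤ v (y 0) := by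
    intro i y
    have h1' : K i y = (v (y i) / S y) * q y := by rw [hK]; ring
    rw [h1']
    calc (v (y i) / S y) * q y ≤ 1 * v (y 0) := by
          apply mul_le_mul _ (hq_le y) (hq_nonneg y) zero_le_one
          rw [div_le_one (hSpos y)]; exact hv_le_S y i
      _ = v (y 0) := one_mul _
  have hIK : ∀ i, Integrable (K i) Pπ := fun i => hbound _ (hKmeas i) (hK_nonneg i) (hK_le i)
  have hite_nonneg : ∀ (y : Fin (L + 1) → α) (i : Fin (L + 1)), 0 ≤ (if s (y i) < 0 then v (y i) else 0) := by
    intro y i; split_ifs; exacts [(hv _).le, le_rfl]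
  have hite_le : ∀ (y : Fin (L + 1) → α) (i : Fin (L + 1)), (if s (y i) < 0 then v (y i) else 0) ≤ v (y i) := by
    intro y i; split_ifs; exacts [le_rfl, (hv _).le]
  have hH_nonneg : ∀ i y, 0 ≤ H i y := by
    intro i y
    exact mul_nonneg (hv _).le (div_nonneg (hite_nonneg y i) (hSpos y).le)
  have hH_le : ∀ i y, H i y ≤ v (y 0) := by
    intro i y
    have : (if s (y i) < 0 then v (y i) else 0) / S y ≤ 1 := by
      rw [div_le_one (hSpos y)]
      exact le_trans (hite_le y i) (hv_le_S y i)
    calc H i y ≤ v (y 0) * 1 :=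
          mul_le_mul_of_nonneg_left this (hv _).le
      _ = v (y 0) := mul_one _
  have hIH : ∀ i, Integrable (H i) Pπ := fun i => hbound _ (hHmeas i) (hH_nonneg i) (hH_le i)
  have hF_nonneg : ∀ y, 0 ≤ F y := by
    intro y
    apply div_nonneg _ (hSpos y).le
    refine add_nonneg (hv _).le ?_
    exact Finset.sum_nonneg fun i _ => (hv _).le
  have hF_le_one : ∀ y, F y ≤ 1 := by
    intro y
    rw [hF]
    rw [div_le_one (hSpos y)]
    have hsub : ∑ i ∈ Finset.univ.filter (fun i : Fin (L + 1) => i ≠ 0 ∧ s (y i) < 0), v (y i)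
        ≤ ∑ i ∈ Finset.univ.erase 0, v (y i) := by
      apply Finset.sum_le_sum_of_subset_of_nonneg
      · intro i hi
        rcases Finset.mem_filter.1 hi with ⟨_, hi2, _⟩
        exact Finset.mem_erase.2 ⟨hi2, Finset.mem_univ i⟩
      · intro i _ _; exact (hv _).le
    calc v (y 0) + ∑ i ∈ Finset.univ.filter (fun i : Fin (L + 1) => i ≠ 0 ∧ s (y i) < 0), v (y i)
        ≤ v (y 0) + ∑ i ∈ Finset.univ.erase 0, v (y i) := by linarith
      _ = S y :=
          Finset.add_sum_erase Finset.univ (fun i : Fin (L + 1) => v (y i)) (Finset.mem_univ 0)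
  have hvF_meas : Measurable fun y : Fin (L + 1) → α => v (y 0) * F y := (hmes_vj 0).mul hFmeas
  have hIvF : Integrable (fun y => v (y 0) * F y) Pπ := by
    refine hbound _ hvF_meas (fun y => mul_nonneg (hv _).le (hF_nonneg y)) fun y => ?_
    calc v (y 0) * F y ≤ v (y 0) * 1 := mul_le_mul_of_nonneg_left (hF_le_one y) (hv _).le
      _ = v (y 0) := mul_one _
  -- pointwise identity (i): v(y0) * indicator = ∑ K i
  have hid1 : ∀ y, v (y 0) * A.indicator (1 : (Fin (L + 1) → α) → ℝ) y = ∑ i, K i y := by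
    intro y
    have hsum : ∑ i, K i y = S y * (q y / S y) := by
      rw [hK]; dsimp only
      rw [← Finset.sum_mul]
    rw [hsum, mul_comm (S y), div_mul_cancel₀ _ (hSpos y).ne']
    rw [hq, hA]; dsimp only
    by_cases hy : s (y 0) < 0
    · simp [Set.indicator_apply, hy]
    · simp [Set.indicator_apply, hy]
  -- pointwise inequality (ii): ∑ H i ≤ v(y0) * F
  have hid2 : ∀ y, ∑ i, H i y ≤ v (y 0) * F y := by
    intro y
    have hsum : ∑ i, H i y
        = v (y 0) * ((∑ i, if s (y i) < 0 then v (y i) else 0) / S y) := by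
      rw [hH]; dsimp only
      rw [← Finset.mul_sum, ← Finset.sum_div]
    rw [hsum, hF]
    have hnum : (∑ i, if s (y i) < 0 then v (y i) else 0)
        ≤ v (y 0) + ∑ i ∈ Finset.univ.filter (fun i : Fin (L + 1) => i ≠ 0 ∧ s (y i) < 0),
            v (y i) := by
      rw [hfilter_sum y]
      calc (∑ i, if s (y i) < 0 then v (y i) else 0)
          ≤ ∑ i : Fin (L + 1),
              ((if i = 0 then v (y 0) else 0) + if i ≠ 0 ∧ s (y i) < 0 then v (y i) else 0) := by
            apply Finset.sum_le_sum
            intro i _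
            by_cases hi : i = 0
            · subst hi
              simp only [if_pos rfl, ne_eq, not_true_eq_false, false_and, if_false, add_zero]
              split_ifs; exacts [le_rfl, (hv _).le]
            · simp [hi]
        _ = v (y 0) + ∑ i, if i ≠ 0 ∧ s (y i) < 0 then v (y i) else 0 := by
            rw [Finset.sum_add_distrib]
            congr 1
            simp
    dsimp only
    apply mul_le_mul_of_nonneg_left _ (hv _).le
    exact (div_le_div_iff_of_pos_right (hSpos y)).mpr hnum
  -- swap identity (iii)
  have hswap : ∀ i : Fin (L + 1), ∫ y, K i y ∂Pπ = ∫ y, H i y ∂Pπ := by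
    intro i
    set σ : Equiv.Perm (Fin (L + 1)) := Equiv.swap 0 i with hσ
    set φ := MeasurableEquiv.piCongrLeft (fun _ : Fin (L + 1) => α) σ with hφdef
    have hφ : MeasurePreserving φ Pπ Pπ :=
      measurePreserving_piCongrLeft (fun _ => P) σ
    have happ : ∀ (x : Fin (L + 1) → α) (j : Fin (L + 1)), φ x j = x (σ j) := by
      intro x j
      conv_lhs => rw [show j = σ (σ j) from (Equiv.swap_apply_self 0 i j).symm]
      exact MeasurableEquiv.piCongrLeft_apply_apply (β := fun _ : Fin (L + 1) => α) σ x (σ j)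
    have hKH : ∀ x, H i (φ x) = K i x := by
      intro x
      have h0' : φ x 0 = x i := by rw [happ, hσ]; rw [Equiv.swap_apply_left]
      have hi' : φ x i = x 0 := by rw [happ, hσ]; rw [Equiv.swap_apply_right]
      have hSs : S (φ x) = S x := by
        simp only [hSdef]
        rw [show (∑ j, v (φ x j)) = ∑ j, v (x (σ j)) from
          Finset.sum_congr rfl fun j _ => by rw [happ]]
        exact Equiv.sum_comp σ fun j => v (x j)
      simp only [hH, hK, hq, h0', hi', hSs]
    calc ∫ y, K i y ∂Pπ = ∫ x, H i (φ x) ∂Pπ := by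
          refine integral_congr_ae (Filter.Eventually.of_forall fun x => ?_)
          exact (hKH x).symm
      _ = ∫ y, H i y ∂Pπ := hφ.integral_comp' (H i)
  -- final chain
  calc (μ {ω | s (Z 0 ω) < 0}).toReal
      = ∫ y, A.indicator (1 : (Fin (L + 1) → α) → ℝ) y ∂(Measure.pi ν) := hLHS
    _ = ∫ y, v (y 0) * A.indicator (1 : (Fin (L + 1) → α) → ℝ) y ∂Pπ := hXfer _
    _ = ∫ y, ∑ i, K i y ∂Pπ := by
        refine integral_congr_ae (Filter.Eventually.of_forall fun y => ?_)
        exact hid1 y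
    _ = ∑ i, ∫ y, K i y ∂Pπ := integral_finset_sum _ fun i _ => hIK i
    _ = ∑ i, ∫ y, H i y ∂Pπ := Finset.sum_congr rfl fun i _ => hswap i
    _ = ∫ y, ∑ i, H i y ∂Pπ := (integral_finset_sum _ fun i _ => hIH i).symm
    _ ≤ ∫ y, v (y 0) * F y ∂Pπ :=
        integral_mono (integrable_finset_sum _ fun i _ => hIH i) hIvF hid2
    _ = ∫ y, F y ∂(Measure.pi ν) := (hXfer F).symm
    _ = _ := hRHS.symm

end Aux

/-- Weighted conformal posterior bound under covariate shift (weighted Fb-CP):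
with calibration points `Z i` (`i ≠ 0`) i.i.d. from `P`, test point `Z 0 ~ Q` with
`dQ/dP = v > 0`, and likelihood-ratio weights `p(y) = v(y)/(Σⱼ v(Zʲ) + v(Z₀))`,
one has `P(s(Z₀) < 0) ≤ E[p(Z₀) + Σᵢ p(Zⁱ)·1[s(Zⁱ) < 0]]`. -/
theorem weighted_conformal_posterior_bound
    {Ω : Type*} [MeasurableSpace Ω] (μ : Measure Ω) [IsProbabilityMeasure μ]
    (m L : ℕ)
    (Z : Fin (L + 1) → Ω → EuclideanSpace ℝ (Fin m))
    (hmeas : ∀ i, Measurable (Z i))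
    (hindep : iIndepFun Z μ)
    (P : Measure (EuclideanSpace ℝ (Fin m))) [IsProbabilityMeasure P]
    (v : EuclideanSpace ℝ (Fin m) → ℝ) (hv : ∀ y, 0 < v y) (hvmeas : Measurable v)
    (hcal : ∀ i : Fin (L + 1), i ≠ 0 → Measure.map (Z i) μ = P)
    (htest : Measure.map (Z 0) μ = P.withDensity (fun y => ENNReal.ofReal (v y)))
    (s : EuclideanSpace ℝ (Fin m) → ℝ) (hs : Measurable s) :
    (μ {ω | s (Z 0 ω) < 0}).toReal ≤
      ∫ ω, (v (Z 0 ω) +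
          ∑ i ∈ Finset.univ.filter (fun i : Fin (L + 1) => i ≠ 0 ∧ s (Z i ω) < 0),
            v (Z i ω)) /
        (∑ i, v (Z i ω)) ∂μ := by
  exact weighted_conformal_posterior_bound_aux μ L Z hmeas hindep P v hv hvmeas hcal htest s hs
end

section
/- Let Y_τ be an ℝᵐ-valued random variable, Ŷ_{τ|s} ∈ ℝᵐ fixed prediction points for s = 0,...,τ-1, σ_{τ|s} > 0 fixed scale constants, and C ≥ 0. Suppose P(max_{s=0,...,τ-1} ‖Y_τ - Ŷ_{τ|s}‖/σ_{τ|s} ≤ C) ≥ 1-α. Let c : ℝⁿ × ℝᵐ → ℝ be L-Lipschitz in its second argument and fix x ∈ ℝⁿ and t ≤ τ-1. If max_{0 ≤ s ≤ t} {c(x, Ŷ_{τ|s}) - L·σ_{τ|s}·C} ≥ 0, then P(c(x, Y_τ) ≥ 0) ≥ 1-α. -/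
open MeasureTheory

/-- Normalized-nonconformity-score chance-constraint reformulation (RF-CP extension):
if with probability `≥ 1-α` one has `‖Y_τ - Ŷ_{τ|s}‖ ≤ σ_{τ|s}·C` simultaneously for all
`s ≤ τ-1`, and for at least one `s ≤ t` the margin `c(x, Ŷ_{τ|s}) ≥ L·σ_{τ|s}·C` holds,
then `P(c(x, Y_τ) ≥ 0) ≥ 1-α`. -/
theorem normalized_score_chance_constraint
    {Ω : Type*} [MeasurableSpace Ω] (μ : Measure Ω) [IsProbabilityMeasure μ]
    (n m τ : ℕ)
    (Y : Ω → EuclideanSpace ℝ (Fin m)) (hY : Measurable Y)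
    (Yhat : Fin (τ + 1) → EuclideanSpace ℝ (Fin m))
    (σs : Fin (τ + 1) → ℝ) (hσ : ∀ s, 0 < σs s)
    (C : ℝ) (hC : 0 ≤ C)
    (c : EuclideanSpace ℝ (Fin n) → EuclideanSpace ℝ (Fin m) → ℝ)
    (L : ℝ) (hL : 0 < L)
    (hlip : ∀ x y y', |c x y - c x y'| ≤ L * ‖y - y'‖)
    (x : EuclideanSpace ℝ (Fin n)) (t : Fin (τ + 1))
    (α : ℝ) (hα : α ∈ Set.Ioo (0 : ℝ) 1)
    (hcov : ENNReal.ofReal (1 - α) ≤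
      μ {ω | ∀ s : Fin (τ + 1), ‖Y ω - Yhat s‖ / σs s ≤ C})
    (hfeas : ∃ s : Fin (τ + 1), s ≤ t ∧ 0 ≤ c x (Yhat s) - L * σs s * C) :
    ENNReal.ofReal (1 - α) ≤ μ {ω | 0 ≤ c x (Y ω)} := by
  obtain ⟨s, -, hs⟩ := hfeas
  refine le_trans hcov (measure_mono ?_)
  intro ω hω
  have h1 : ‖Y ω - Yhat s‖ ≤ σs s * C := by
    have := hω s
    rw [div_le_iff₀ (hσ s)] at this
    linarith [this]
  have h2 := (abs_le.mp (hlip x (Y ω) (Yhat s))).1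
  have h3 : L * ‖Y ω - Yhat s‖ ≤ L * (σs s * C) :=
    mul_le_mul_of_nonneg_left h1 hL.le
  simp only [Set.mem_setOf_eq]
  nlinarith [hlip x (Y ω) (Yhat s), abs_le.mp (hlip x (Y ω) (Yhat s))]
end
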